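/- Rational Monotonicity: if L_α = L_β, σ ⊬_k ¬α and σ ⊢_k β, then σ * α ⊢_k β. -/

import Mathlib

namespace BeliefSeq

/-- Propositional formulas over a type `ν` of propositional variables,
with connectives ¬, ∧, ∨, →, ↔ and constants true, false. -/
inductive PropForm (ν : Type) : Type where
  | var : ν → PropForm ν
  | tru : PropForm ν
  | fls : PropForm ν
  | neg : PropForm ν → PropForm ν
  | conj : PropForm ν → PropForm ν → PropForm ν
  | disj : PropForm ν → PropForm ν → PropForm ν
  | impl : PropForm ν → PropForm ν → PropForm ν
  | biim : PropForm ν → PropForm ν → PropForm ν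

namespace PropForm

variable {ν : Type}

/-- Classical (two-valued) evaluation of a formula under a valuation. -/
def eval (v : ν → Bool) : PropForm ν → Bool
  | var x => v x
  | tru => true
  | fls => false
  | neg φ => !(φ.eval v)
  | conj φ ψ => φ.eval v && ψ.eval v
  | disj φ ψ => φ.eval v || ψ.eval v
  | impl φ ψ => !(φ.eval v) || ψ.eval v
  | biim φ ψ => φ.eval v == ψ.eval v

/-- The set `L(α)` of variables occurring syntactically in a formula. -/
def vars : PropForm ν → Set ν
  | var x => {x}
  | tru => ∅
  | fls => ∅
  | neg φ => φ.vars
  | conj φ ψ => φ.vars ∪ ψ.vars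
  | disj φ ψ => φ.vars ∪ ψ.vars
  | impl φ ψ => φ.vars ∪ ψ.vars
  | biim φ ψ => φ.vars ∪ ψ.vars

end PropForm

variable {ν : Type}

/-- `α ⇔ β` : logical equivalence (α ↔ β is a tautology). -/
def Equiv (α β : PropForm ν) : Prop := ∀ v, α.eval v = β.eval v

def Tautology (α : PropForm ν) : Prop := ∀ v, α.eval v = true

def Contradiction (α : PropForm ν) : Prop := ∀ v, α.eval v = false

/-- Classical consequence `Γ ⊢ γ`. -/
def Entails (Γ : Set (PropForm ν)) (γ : PropForm ν) : Prop :=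
  ∀ v, (∀ φ ∈ Γ, φ.eval v = true) → γ.eval v = true

/-- Consistency (satisfiability) of a set of formulas. -/
def Satisfiable (Γ : Set (PropForm ν)) : Prop :=
  ∃ v, ∀ φ ∈ Γ, φ.eval v = true

/-- `V` expresses `α`: α is logically equivalent to some formula
all of whose variables lie in `V`. -/
def Expresses (V : Set ν) (α : PropForm ν) : Prop :=
  ∃ β : PropForm ν, Equiv α β ∧ β.vars ⊆ V

/-- `L_α` : the smallest language of `α` (intersection of all sets of
variables expressing `α`). -/
def Lang (α : PropForm ν) : Set ν := ⋂₀ {V : Set ν | Expresses V α}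

/-- Direct relevance (`0`-relevance): logical language overlap `L_α ∩ L_β ≠ ∅`. -/
def DirectRel (α β : PropForm ν) : Prop := (Lang α ∩ Lang β).Nonempty

/-- `k`-relevance of `α`, `β` w.r.t. the belief sequence `σ`:
there is a chain `χ_1, …, χ_k` of formulas of `σ` with
`α, χ₁` directly relevant, each `χ_i, χ_{i+1}` directly relevant,
and `χ_k, β` directly relevant (for `k = 0` this is direct relevance). -/
def KRel (k : ℕ) (α β : PropForm ν) (σ : List (PropForm ν)) : Prop :=
  ∃ l : List (PropForm ν), l.length = k ∧ (∀ χ ∈ l, χ ∈ σ) ∧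
    List.Chain' DirectRel (α :: (l ++ [β]))

/-- `rel(α,β,σ)` : the least `k` such that `α, β` are `k`-relevant w.r.t. `σ`
(`∞ = ⊤` if they are irrelevant). -/
noncomputable def relDeg (α β : PropForm ν) (σ : List (PropForm ν)) : ℕ∞ :=
  sInf {n : ℕ∞ | ∃ k : ℕ, n = (k : ℕ∞) ∧ KRel k α β σ}

open Classical in
/-- The priority ordering imposed by the query `γ` on the (indexed) entries of `σ`:
more relevant first; among equally relevant entries, more recent
(larger index) first. -/
noncomputable def priority (γ : PropForm ν) (σ : List (PropForm ν)) :
    (ℕ × PropForm ν) → (ℕ × PropForm ν) → Bool :=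
  fun a b =>
    decide (relDeg γ a.2 σ < relDeg γ b.2 σ ∨
      (relDeg γ a.2 σ = relDeg γ b.2 σ ∧ b.1 ≤ a.1))

/-- The entries `δ_1, …, δ_n` of `σ` reordered by the priority above. -/
noncomputable def prioritized (γ : PropForm ν) (σ : List (PropForm ν)) :
    List (PropForm ν) :=
  ((σ.zipIdx.map Prod.swap).mergeSort (priority γ σ)).map Prod.snd

open Classical in
/-- The prioritized maxiconsistent set `Γ_{⟨σ,k,γ⟩}` : go through `δ_1, …, δ_n`
in priority order, skipping `δ_{i+1}` if `Γ^i ⊢ ¬δ_{i+1}` or `δ_{i+1}` is not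
`k`-relevant to `γ` w.r.t. `σ`, and adding it otherwise. -/
noncomputable def Gamma (σ : List (PropForm ν)) (k : ℕ) (γ : PropForm ν) :
    Set (PropForm ν) :=
  (prioritized γ σ).foldl
    (fun Γ δ =>
      if Entails Γ (PropForm.neg δ) ∨ (k : ℕ∞) < relDeg γ δ σ then Γ
      else insert δ Γ) ∅

/-- `σ ⊢_k γ` iff `Γ_{⟨σ,k,γ⟩} ⊢ γ`. -/
def InferK (σ : List (PropForm ν)) (k : ℕ) (γ : PropForm ν) : Prop :=
  Entails (Gamma σ k γ) γ

/-- `C_k(σ) = {γ | σ ⊢_k γ}`. -/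
def Ck (σ : List (PropForm ν)) (k : ℕ) : Set (PropForm ν) :=
  {γ | InferK σ k γ}

/-- Revision `σ * γ` : concatenation of `γ` at the (most recent) end of `σ`. -/
def revise (σ : List (PropForm ν)) (γ : PropForm ν) : List (PropForm ν) :=
  σ ++ [γ]

/-!
Since `L_α = L_β`, appending `α` to `σ` changes no relevance degree to the query `β`: a chain
through `α` can be cut at an occurrence of `α` and restarted at `β`, which shortens it. For the
same reason `α` is at least as relevant to `β` as every other entry, and being the most recent it
comes first in the priority order. So `Γ_{σ*α,k,β}` is the greedy construction of `Γ_{σ,k,β}`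
started from `{α}` (or from `∅`) instead of `∅`. As `¬α` and `β` have the same language,
`Γ_{σ,k,¬α} = Γ_{σ,k,β}`, and `σ ⊬_k ¬α` says that `α` is consistent with `Γ_{σ,k,β}`. Then
starting from `{α}` blocks no entry that was accepted before, so `Γ_{σ*α,k,β} ⊇ Γ_{σ,k,β} ⊢ β`.
-/

theorem _root_.List.mergeSort_append_singleton_of_le {ι : Type*} {le : ι → ι → Bool}
    (trans : ∀ a b c, le a b → le b c → le a c) (total : ∀ a b, le a b || le b a)
    {l : List ι} {a : ι}
    (antisymm : ∀ x ∈ l ++ [a], ∀ y ∈ l ++ [a], le x y → le y x → x = y)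
    (ha : ∀ b ∈ l, le a b) :
    (l ++ [a]).mergeSort le = a :: l.mergeSort le := by
  have hperm : List.Perm ((l ++ [a]).mergeSort le) (a :: l.mergeSort le) :=
    (List.mergeSort_perm _ le).trans <|
      (List.perm_append_singleton a l).trans ((List.mergeSort_perm l le).symm.cons a)
  refine hperm.eq_of_pairwise (fun x y hx hy hxy hyx => ?_) (List.pairwise_mergeSort trans total _)
    (List.pairwise_cons.2 ⟨fun b hb => ha b ((List.mergeSort_perm l le).subset hb),
      List.pairwise_mergeSort trans total l⟩)
  exact antisymm x ((List.mergeSort_perm _ le).subset hx)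
    y ((List.mergeSort_perm _ le).subset (hperm.symm.subset hy)) hxy hyx

section Logic

theorem Entails.mono {A B : Set (PropForm ν)} {γ : PropForm ν} (hA : Entails A γ)
    (hAB : A ⊆ B) : Entails B γ :=
  fun v hv => hA v fun φ hφ => hv φ (hAB hφ)

theorem Satisfiable.anti {A B : Set (PropForm ν)} (hB : Satisfiable B) (hAB : A ⊆ B) :
    Satisfiable A :=
  let ⟨v, hv⟩ := hB
  ⟨v, fun φ hφ => hv φ (hAB hφ)⟩

theorem satisfiable_insert_iff_not_entails_neg {Γ : Set (PropForm ν)} {α : PropForm ν} :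
    Satisfiable (insert α Γ) ↔ ¬ Entails Γ (PropForm.neg α) := by
  simp [Satisfiable, Entails, PropForm.eval, and_comm]

theorem expresses_neg_iff {V : Set ν} {α : PropForm ν} :
    Expresses V (PropForm.neg α) ↔ Expresses V α := by
  constructor <;> rintro ⟨γ, hγ, hV⟩ <;> refine ⟨PropForm.neg γ, fun v => ?_, hV⟩ <;>
    simp [PropForm.eval, ← hγ v]

theorem lang_neg (α : PropForm ν) : Lang (PropForm.neg α) = Lang α := by
  simp only [Lang, expresses_neg_iff]

end Logic

section Relevance

variable {α α' β δ : PropForm ν} {σ σ' : List (PropForm ν)} {k : ℕ}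

theorem directRel_congr_left (h : Lang α = Lang α') : DirectRel α β ↔ DirectRel α' β := by
  rw [DirectRel, DirectRel, h]

theorem isChain_directRel_cons_congr (h : Lang α = Lang α') {t : List (PropForm ν)}
    (hc : List.IsChain DirectRel (α :: t)) : List.IsChain DirectRel (α' :: t) := by
  cases t with
  | nil => exact List.isChain_singleton α'
  | cons χ t =>
    rw [List.isChain_cons_cons] at hc ⊢
    exact ⟨(directRel_congr_left h).1 hc.1, hc.2⟩

theorem kRel_congr_left (h : Lang α = Lang α') : KRel k α β σ ↔ KRel k α' β σ :=
  ⟨fun ⟨l, hl, hσ, hc⟩ => ⟨l, hl, hσ, isChain_directRel_cons_congr h hc⟩,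
    fun ⟨l, hl, hσ, hc⟩ => ⟨l, hl, hσ, isChain_directRel_cons_congr h.symm hc⟩⟩

theorem KRel.mono (h : KRel k α β σ) (hσ : σ ⊆ σ') : KRel k α β σ' :=
  let ⟨l, hl, hmem, hc⟩ := h
  ⟨l, hl, fun χ hχ => hσ (hmem χ hχ), hc⟩

theorem KRel.lang_nonempty_left (h : KRel k α β σ) : (Lang α).Nonempty := by
  obtain ⟨l, -, -, hc⟩ := h
  obtain ⟨χ, t, ht⟩ := List.exists_cons_of_ne_nil (List.append_ne_nil_of_right_ne_nil l
    (List.cons_ne_nil β []))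
  rw [ht] at hc
  exact (List.isChain_cons_cons.1 hc).1.mono Set.inter_subset_left

theorem kRel_zero_of_directRel (h : DirectRel α β) : KRel 0 α β σ :=
  ⟨[], rfl, by simp, List.isChain_pair.2 h⟩

theorem relDeg_le_of_kRel (h : KRel k α β σ) : relDeg α β σ ≤ k :=
  sInf_le ⟨k, rfl, h⟩

theorem relDeg_le_relDeg_of_forall_kRel {α' β' : PropForm ν}
    (h : ∀ k, KRel k α β σ → ∃ k' ≤ k, KRel k' α' β' σ') :
    relDeg α' β' σ' ≤ relDeg α β σ := by
  refine le_sInf ?_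
  rintro _ ⟨k, rfl, hk⟩
  obtain ⟨k', hk', h'⟩ := h k hk
  exact (relDeg_le_of_kRel h').trans (by exact_mod_cast hk')

theorem relDeg_congr_left (h : Lang α = Lang α') : relDeg α β σ = relDeg α' β σ :=
  le_antisymm (relDeg_le_relDeg_of_forall_kRel fun k hk => ⟨k, le_rfl, (kRel_congr_left h).2 hk⟩)
    (relDeg_le_relDeg_of_forall_kRel fun k hk => ⟨k, le_rfl, (kRel_congr_left h).1 hk⟩)

theorem exists_kRel_le_of_kRel_append (hL : Lang α = Lang β) :
    ∀ k, KRel k β δ (σ ++ [α]) → ∃ k' ≤ k, KRel k' β δ σ := by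
  intro k
  induction k using Nat.strong_induction_on with
  | _ k ih =>
    rintro ⟨l, rfl, hmem, hc⟩
    by_cases hα : α ∈ l
    · obtain ⟨l₁, l₂, rfl⟩ := List.append_of_mem hα
      have hsuffix : List.IsChain DirectRel (α :: (l₂ ++ [δ])) :=
        List.IsChain.suffix hc ⟨β :: l₁, by simp⟩
      have hshort : KRel l₂.length β δ (σ ++ [α]) :=
        ⟨l₂, rfl, fun χ hχ => hmem χ (by simp [hχ]), isChain_directRel_cons_congr hL hsuffix⟩
      have hlt : l₂.length < (l₁ ++ α :: l₂).length := by
        simp only [List.length_append, List.length_cons]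
        omega
      obtain ⟨k', hk', hK⟩ := ih l₂.length hlt hshort
      exact ⟨k', hk'.trans hlt.le, hK⟩
    · refine ⟨l.length, le_rfl, l, rfl, fun χ hχ => ?_, hc⟩
      rcases List.mem_append.1 (hmem χ hχ) with h | h
      · exact h
      · exact absurd (List.mem_singleton.1 h ▸ hχ) hα

theorem relDeg_append_of_lang_eq (hL : Lang α = Lang β) :
    relDeg β δ (σ ++ [α]) = relDeg β δ σ :=
  le_antisymm
    (relDeg_le_relDeg_of_forall_kRel fun k hk => ⟨k, le_rfl, hk.mono (List.subset_append_left _ _)⟩)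
    (relDeg_le_relDeg_of_forall_kRel (exists_kRel_le_of_kRel_append hL))

theorem relDeg_le_relDeg_of_lang_eq (hL : Lang α = Lang β) (δ : PropForm ν) :
    relDeg β α σ ≤ relDeg β δ σ :=
  relDeg_le_relDeg_of_forall_kRel fun _ hk => ⟨0, Nat.zero_le _, kRel_zero_of_directRel <| by
    rw [DirectRel, hL, Set.inter_self]
    exact hk.lang_nonempty_left⟩

end Relevance

section Priority

variable (γ : PropForm ν) (σ : List (PropForm ν))

theorem priority_trans (a b c : ℕ × PropForm ν) :
    priority γ σ a b → priority γ σ b c → priority γ σ a c := by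
  simp only [priority, decide_eq_true_iff]
  rintro (hab | ⟨hab, hba⟩) (hbc | ⟨hbc, hcb⟩)
  · exact Or.inl (hab.trans hbc)
  · exact Or.inl (hbc ▸ hab)
  · exact Or.inl (hab ▸ hbc)
  · exact Or.inr ⟨hab.trans hbc, hcb.trans hba⟩

theorem priority_total (a b : ℕ × PropForm ν) : priority γ σ a b || priority γ σ b a := by
  simp only [priority, Bool.or_eq_true, decide_eq_true_iff]
  rcases lt_trichotomy (relDeg γ a.2 σ) (relDeg γ b.2 σ) with h | h | h
  · exact Or.inl (Or.inl h)
  · rcases le_total b.1 a.1 with h' | h'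
    · exact Or.inl (Or.inr ⟨h, h'⟩)
    · exact Or.inr (Or.inr ⟨h.symm, h'⟩)
  · exact Or.inr (Or.inl h)

theorem fst_eq_of_priority {a b : ℕ × PropForm ν} (hab : priority γ σ a b)
    (hba : priority γ σ b a) : a.1 = b.1 := by
  simp only [priority, decide_eq_true_iff] at hab hba
  rcases hab with hab | ⟨hab, hab'⟩ <;> rcases hba with hba | ⟨hba, hba'⟩
  · exact absurd hba hab.not_gt
  · exact absurd hba hab.ne'
  · exact absurd hab hba.ne'
  · omega

theorem eq_of_mem_zipIdx_swap {a b : ℕ × PropForm ν} (ha : a ∈ σ.zipIdx.map Prod.swap)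
    (hb : b ∈ σ.zipIdx.map Prod.swap) (h : a.1 = b.1) : a = b := by
  obtain ⟨a', ha', rfl⟩ := List.mem_map.1 ha
  obtain ⟨b', hb', rfl⟩ := List.mem_map.1 hb
  rw [List.mem_zipIdx_iff_getElem?] at ha' hb'
  simp only [Prod.fst_swap] at h
  rw [h, hb', Option.some_inj] at ha'
  exact Prod.ext h ha'.symm

variable {γ σ} {α : PropForm ν}

theorem priority_append_of_lang_eq (hL : Lang α = Lang γ) :
    priority γ (σ ++ [α]) = priority γ σ := by
  funext a b
  simp only [priority, relDeg_append_of_lang_eq hL]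

theorem prioritized_append_of_lang_eq (hL : Lang α = Lang γ) :
    prioritized γ (σ ++ [α]) = α :: prioritized γ σ := by
  have hidx : (σ ++ [α]).zipIdx.map Prod.swap = σ.zipIdx.map Prod.swap ++ [(σ.length, α)] := by
    simp [List.zipIdx_append]
  have hfirst : ∀ b ∈ σ.zipIdx.map Prod.swap, priority γ σ (σ.length, α) b := by
    intro b hb
    obtain ⟨b', hb', rfl⟩ := List.mem_map.1 hb
    have hlt : b'.2 < σ.length :=
      (List.getElem?_eq_some_iff.1 (List.mem_zipIdx_iff_getElem?.1 hb')).1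
    simp only [priority, decide_eq_true_iff]
    rcases (relDeg_le_relDeg_of_lang_eq hL b'.1 (σ := σ)).lt_or_eq with h | h
    · exact Or.inl h
    · exact Or.inr ⟨h, hlt.le⟩
  have hsort := List.mergeSort_append_singleton_of_le (priority_trans γ σ) (priority_total γ σ)
    (fun x hx y hy hxy hyx => eq_of_mem_zipIdx_swap (σ ++ [α]) (hidx ▸ hx) (hidx ▸ hy)
      (fst_eq_of_priority γ σ hxy hyx)) hfirst
  rw [prioritized, priority_append_of_lang_eq hL, hidx, hsort]
  rfl

end Priority

section Gamma

open Classical in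
/-- The step of the fold defining `Gamma`, with `r δ` standing for `rel(γ, δ, σ)`. -/
noncomputable def gammaStep (r : PropForm ν → ℕ∞) (k : ℕ) (Γ : Set (PropForm ν))
    (δ : PropForm ν) : Set (PropForm ν) :=
  if Entails Γ (PropForm.neg δ) ∨ (k : ℕ∞) < r δ then Γ else insert δ Γ

variable (r : PropForm ν → ℕ∞) (k : ℕ)

theorem gamma_eq_foldl_gammaStep (σ : List (PropForm ν)) (γ : PropForm ν) :
    Gamma σ k γ = (prioritized γ σ).foldl (gammaStep (relDeg γ · σ) k) ∅ :=
  rfl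

theorem gammaStep_eq_or (Γ : Set (PropForm ν)) (δ : PropForm ν) :
    gammaStep r k Γ δ = Γ ∨ gammaStep r k Γ δ = insert δ Γ := by
  unfold gammaStep
  split_ifs <;> simp

theorem subset_foldl_gammaStep (l : List (PropForm ν)) (A : Set (PropForm ν)) :
    A ⊆ l.foldl (gammaStep r k) A := by
  induction l generalizing A with
  | nil => exact le_rfl
  | cons δ l ih =>
    refine subset_trans ?_ (ih _)
    rcases gammaStep_eq_or r k A δ with h | h <;> rw [h]
    exact Set.subset_insert δ A

theorem gammaStep_insert {α δ : PropForm ν} {A : Set (PropForm ν)}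
    (hsat : Satisfiable (insert α (gammaStep r k A δ))) :
    gammaStep r k (insert α A) δ = insert α (gammaStep r k A δ) := by
  unfold gammaStep at hsat ⊢
  by_cases hA : Entails A (PropForm.neg δ) ∨ (k : ℕ∞) < r δ
  · have hαA : Entails (insert α A) (PropForm.neg δ) ∨ (k : ℕ∞) < r δ :=
      hA.imp_left fun h => h.mono (Set.subset_insert α A)
    rw [if_pos hA, if_pos hαA]
  · rw [if_neg hA] at hsat ⊢
    have hδ : ¬ Entails (insert α A) (PropForm.neg δ) :=
      satisfiable_insert_iff_not_entails_neg.1 (by rwa [Set.insert_comm])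
    rw [if_neg (not_or.2 ⟨hδ, (not_or.1 hA).2⟩), Set.insert_comm]

theorem foldl_gammaStep_insert {α : PropForm ν} :
    ∀ (l : List (PropForm ν)) (A : Set (PropForm ν)),
      Satisfiable (insert α (l.foldl (gammaStep r k) A)) →
      l.foldl (gammaStep r k) (insert α A) = insert α (l.foldl (gammaStep r k) A)
  | [], _, _ => rfl
  | δ :: l, A, hsat => by
    have hstep : Satisfiable (insert α (gammaStep r k A δ)) :=
      hsat.anti (Set.insert_subset_insert (subset_foldl_gammaStep r k l _))
    rw [List.foldl_cons, List.foldl_cons, gammaStep_insert r k hstep]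
    exact foldl_gammaStep_insert l _ hsat

variable {k} {σ : List (PropForm ν)} {α γ : PropForm ν}

theorem gamma_congr {γ' : PropForm ν} (h : Lang γ = Lang γ') : Gamma σ k γ = Gamma σ k γ' := by
  have hprio : priority γ σ = priority γ' σ := by
    funext a b
    simp only [priority, relDeg_congr_left h]
  have hrel : (relDeg γ · σ) = (relDeg γ' · σ) := funext fun _ => relDeg_congr_left h
  rw [gamma_eq_foldl_gammaStep, gamma_eq_foldl_gammaStep, prioritized, prioritized, hprio, hrel]

theorem gamma_revise_of_lang_eq (hL : Lang α = Lang γ) :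
    Gamma (revise σ α) k γ =
      (prioritized γ σ).foldl (gammaStep (relDeg γ · σ) k) (gammaStep (relDeg γ · σ) k ∅ α) := by
  simp only [gamma_eq_foldl_gammaStep, revise, prioritized_append_of_lang_eq hL,
    relDeg_append_of_lang_eq hL, List.foldl_cons]

theorem gamma_subset_gamma_revise (hL : Lang α = Lang γ)
    (hsat : Satisfiable (insert α (Gamma σ k γ))) : Gamma σ k γ ⊆ Gamma (revise σ α) k γ := by
  rw [gamma_revise_of_lang_eq hL, gamma_eq_foldl_gammaStep]
  rw [gamma_eq_foldl_gammaStep] at hsat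
  rcases gammaStep_eq_or (relDeg γ · σ) k ∅ α with h | h <;> rw [h]
  rw [foldl_gammaStep_insert _ _ _ _ hsat]
  exact Set.subset_insert _ _

end Gamma

/-- Rational Monotonicity: if `L_α = L_β`, `σ ⊬_k ¬α`
and `σ ⊢_k β`, then `σ * α ⊢_k β`. -/
theorem rational_monotonicity {ν : Type} (α β : PropForm ν)
    (hL : Lang α = Lang β) (σ : List (PropForm ν)) (k : ℕ)
    (hα : ¬ InferK σ k (PropForm.neg α)) (hβ : InferK σ k β) :
    InferK (revise σ α) k β := by
  have hΓ : Gamma σ k (PropForm.neg α) = Gamma σ k β := gamma_congr (by rw [lang_neg, hL])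
  rw [InferK, hΓ] at hα
  exact Entails.mono hβ (gamma_subset_gamma_revise hL (satisfiable_insert_iff_not_entails_neg.2 hα))

end BeliefSeq
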